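/- arXiv:1810.08349 — 4 statements merged into one kernel-verified Lean document; each statement's English description precedes it below -/
import Mathlib

section
/- Let (X,Σ_X,μ) and (Y,Σ_Y,ν) be finite positive measure spaces with μ(X) = ν(Y), and let Φ : M_μ → M_ν be a Markov transfunction. Then for every finite positive measure λ ∈ M_μ, setting ρ := Φλ (a finite positive measure in M_ν), there exists a Markov operator T : L^∞(X,λ) → L^∞(Y,ρ) such that ∫_B T(1_A) dρ = Φ(1_A λ)(B) for all measurable A ⊆ X and B ⊆ Y. -/
open MeasureTheory Filter Topology

/-- total variation norm of a finite signed measure -/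
noncomputable def tv {Z : Type*} [MeasurableSpace Z] (s : SignedMeasure Z) : ℝ :=
  (SignedMeasure.totalVariation s Set.univ).toReal

/-- `M_μ`: the set of finite signed measures absolutely continuous with respect to `μ`. -/
def AC {Z : Type*} [MeasurableSpace Z] (μ : Measure Z) : Set (SignedMeasure Z) :=
  {s | VectorMeasure.AbsolutelyContinuous s μ.toENNRealVectorMeasure}

/-!
Pushing densities through `Φ`, the map `f ↦ Φ(f λ)` is positive and linear and sends `1` to `ρ`.
For `f ∈ L^∞(λ)`, positivity applied to `‖f‖ ± f` gives `|Φ(f λ)(B)| ≤ ‖f‖ ρ(B)`, so `Φ(f λ)` has a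
Radon–Nikodym derivative `T f ∈ L^∞(ρ)` with respect to `ρ`. A bounded density is determined by its
measure, so `T` is linear, and its Markov properties transcribe positivity of `Φ`, `Φ λ = ρ` and
preservation of total mass.
-/

theorem LinearMap.exists_comp_eq_of_range_le {R M N E : Type*} [Ring R] [AddCommGroup M]
    [AddCommGroup N] [AddCommGroup E] [Module R M] [Module R N] [Module R E] {W : M →ₗ[R] N}
    (hW : Function.Injective W) {Ψ : E →ₗ[R] N} (h : range Ψ ≤ range W) :
    ∃ T : E →ₗ[R] M, W ∘ₗ T = Ψ :=
  ⟨(LinearEquiv.ofInjective W hW).symm.toLinearMap ∘ₗ Ψ.codRestrict (range W) fun x => h ⟨x, rfl⟩,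
    by ext x; simp⟩

namespace MeasureTheory

variable {α : Type*} [MeasurableSpace α] {p : ENNReal} {m : Measure α}

theorem Lp.ae_norm_le_norm_top {E : Type*} [NormedAddCommGroup E] (f : Lp E ⊤ m) :
    ∀ᵐ x ∂m, ‖f x‖ ≤ ‖f‖ := by
  filter_upwards [ae_le_eLpNormEssSup (f := f)] with x hx
  rw [← ofReal_norm] at hx
  rw [Lp.norm_def, eLpNorm_exponent_top]
  exact (ENNReal.ofReal_le_iff_le_toReal (by simpa using Lp.eLpNorm_ne_top f)).1 hx

theorem Measure.withDensityᵥ_one (m : Measure α) [IsFiniteMeasure m] :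
    m.withDensityᵥ (fun _ => (1 : ℝ)) = m.toSignedMeasure := by
  ext s hs
  rw [withDensityᵥ_apply (integrable_const 1) hs, toSignedMeasure_apply_measurable hs,
    setIntegral_const, smul_eq_mul, mul_one]

theorem Measure.zero_le_withDensityᵥ {f : α → ℝ} (hf : 0 ≤ᵐ[m] f) : 0 ≤ m.withDensityᵥ f := by
  by_cases hfi : Integrable f m
  · intro s hs
    rw [zero_apply, withDensityᵥ_apply hfi hs]
    exact integral_nonneg_of_ae (ae_restrict_of_ae hf)
  · rw [withDensityᵥ, dif_neg hfi]

theorem ae_nonneg_of_zero_le_withDensityᵥ {f : α → ℝ} (hf : Integrable f m)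
    (h : 0 ≤ m.withDensityᵥ f) : 0 ≤ᵐ[m] f :=
  ae_nonneg_of_forall_setIntegral_nonneg hf fun s hs _ => by
    simpa [withDensityᵥ_apply hf hs] using h s hs

theorem Measure.toENNRealVectorMeasure_absolutelyContinuous (m : Measure α) [IsFiniteMeasure m] :
    m.toENNRealVectorMeasure ≪ᵥ m.toSignedMeasure :=
  VectorMeasure.AbsolutelyContinuous.mk fun s hs h0 => by
    rw [toSignedMeasure_apply_measurable hs, measureReal_eq_zero_iff] at h0
    rwa [toENNRealVectorMeasure_apply_measurable hs]

variable [Fact (1 ≤ p)] [IsFiniteMeasure m]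

theorem Lp.integrable (f : Lp ℝ p m) : Integrable f m :=
  (Lp.memLp f).integrable Fact.out

variable (p m) in
noncomputable def Lp.withDensityᵥₗ : Lp ℝ p m →ₗ[ℝ] SignedMeasure α where
  toFun f := m.withDensityᵥ f
  map_add' f g := by
    rw [WithDensityᵥEq.congr_ae (Lp.coeFn_add f g),
      withDensityᵥ_add (Lp.integrable f) (Lp.integrable g)]
  map_smul' r f := by
    rw [WithDensityᵥEq.congr_ae (Lp.coeFn_smul r f), withDensityᵥ_smul, RingHom.id_apply]

theorem Lp.withDensityᵥₗ_injective : Function.Injective (Lp.withDensityᵥₗ p m) := fun f g h =>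
  Lp.ext ((Lp.integrable f).ae_eq_of_withDensityᵥ_eq (Lp.integrable g) h)

theorem exists_Lp_top_withDensityᵥ_eq_of_abs_le {s : SignedMeasure α} {c : ℝ}
    (h : ∀ s', MeasurableSet s' → |s s'| ≤ c * m.real s') :
    ∃ g : Lp ℝ ⊤ m, m.withDensityᵥ g = s := by
  have hac : s ≪ᵥ m.toENNRealVectorMeasure :=
    VectorMeasure.AbsolutelyContinuous.mk fun t ht h0 => by
      rw [Measure.toENNRealVectorMeasure_apply_measurable ht] at h0
      simpa [measureReal_def, h0] using h t ht
  set D := s.rnDeriv m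
  have hD : Integrable D m := SignedMeasure.integrable_rnDeriv _ _
  have hsD : m.withDensityᵥ D = s := SignedMeasure.withDensityᵥ_rnDeriv_eq _ _ hac
  have hsetIntegral (t) (ht : MeasurableSet t) : ∫ y in t, D y ∂m = s t := by
    rw [← withDensityᵥ_apply hD ht, hsD]
  have hle := ae_le_of_forall_setIntegral_le hD (integrable_const c) fun t ht _ => by
    rw [hsetIntegral t ht, setIntegral_const, smul_eq_mul]
    linarith [le_abs_self (s t), h t ht]
  have hge := ae_le_of_forall_setIntegral_le (integrable_const (-c)) hD fun t ht _ => by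
    rw [hsetIntegral t ht, setIntegral_const, smul_eq_mul]
    linarith [neg_abs_le (s t), h t ht]
  have hmem : MemLp D ⊤ m := memLp_top_of_bound hD.1 c <| by
    filter_upwards [hle, hge] with y h₁ h₂
    exact abs_le.2 ⟨h₂, h₁⟩
  exact ⟨hmem.toLp D, by rw [WithDensityᵥEq.congr_ae hmem.coeFn_toLp, hsD]⟩

end MeasureTheory

section Transfunction

variable {X Y : Type*} [MeasurableSpace X] [MeasurableSpace Y] {μ : Measure X} {ν : Measure Y}

structure IsLinearTransfunction (Φ : AC μ → AC ν) : Prop where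
  map_add : ∀ a b c : AC μ, c.1 = a.1 + b.1 → (Φ c).1 = (Φ a).1 + (Φ b).1
  map_smul : ∀ (r : ℝ) (a c : AC μ), c.1 = r • a.1 → (Φ c).1 = r • (Φ a).1

variable (Φ : AC μ → AC ν) {lam : Measure X} [IsFiniteMeasure lam]

theorem withDensityᵥ_mem_AC (hlam : lam.toSignedMeasure ∈ AC μ) (f : X → ℝ) :
    lam.withDensityᵥ f ∈ AC μ :=
  ((lam.withDensityᵥ_absolutelyContinuous f).trans
    lam.toENNRealVectorMeasure_absolutelyContinuous).trans hlam

variable (hlam : lam.toSignedMeasure ∈ AC μ) {f g : X → ℝ}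

noncomputable def transferDensity (f : X → ℝ) : SignedMeasure Y :=
  (Φ ⟨lam.withDensityᵥ f, withDensityᵥ_mem_AC hlam f⟩).1

theorem transferDensity_of_eq {a : AC μ} (ha : a.1 = lam.withDensityᵥ f) :
    (Φ a).1 = transferDensity Φ hlam f :=
  congrArg (fun b => (Φ b).1) (Subtype.ext ha)

theorem transferDensity_congr_ae (h : f =ᵐ[lam] g) :
    transferDensity Φ hlam f = transferDensity Φ hlam g :=
  transferDensity_of_eq Φ hlam (WithDensityᵥEq.congr_ae h)

theorem transferDensity_one :
    transferDensity Φ hlam (fun _ => 1) = (Φ ⟨lam.toSignedMeasure, hlam⟩).1 :=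
  (transferDensity_of_eq Φ hlam lam.withDensityᵥ_one.symm).symm

theorem transferDensity_nonneg (hpos : ∀ a : AC μ, 0 ≤ a.1 → 0 ≤ (Φ a).1) (hf : 0 ≤ᵐ[lam] f) :
    0 ≤ transferDensity Φ hlam f :=
  hpos _ (Measure.zero_le_withDensityᵥ hf)

theorem transferDensity_apply_univ (hpres : ∀ a : AC μ, (Φ a).1 Set.univ = a.1 Set.univ)
    (hf : Integrable f lam) : transferDensity Φ hlam f Set.univ = ∫ x, f x ∂lam := by
  rw [transferDensity, hpres, withDensityᵥ_apply hf .univ, setIntegral_univ]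

namespace IsLinearTransfunction

variable {Φ}

theorem transferDensity_add (hΦ : IsLinearTransfunction Φ) (hf : Integrable f lam)
    (hg : Integrable g lam) :
    transferDensity Φ hlam (f + g) = transferDensity Φ hlam f + transferDensity Φ hlam g :=
  hΦ.map_add _ _ _ (withDensityᵥ_add hf hg)

theorem transferDensity_smul (hΦ : IsLinearTransfunction Φ) (r : ℝ) (f : X → ℝ) :
    transferDensity Φ hlam (r • f) = r • transferDensity Φ hlam f :=
  hΦ.map_smul r _ _ (withDensityᵥ_smul f r)

theorem transferDensity_apply_le (hΦ : IsLinearTransfunction Φ)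
    (hpos : ∀ a : AC μ, 0 ≤ a.1 → 0 ≤ (Φ a).1) (hf : Integrable f lam) {c : ℝ}
    (hfc : ∀ᵐ x ∂lam, f x ≤ c) {s : Set Y} (hs : MeasurableSet s) :
    transferDensity Φ hlam f s ≤ c * transferDensity Φ hlam (fun _ => 1) s := by
  have hsplit : c • (fun _ => (1 : ℝ)) = (fun _ => c) - f + f := by
    ext x; simp
  have hrest : 0 ≤ transferDensity Φ hlam ((fun _ => c) - f) s := by
    refine transferDensity_nonneg Φ hlam hpos ?_ s hs
    filter_upwards [hfc] with x hx using sub_nonneg.2 hx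
  have h := congrArg (fun t : SignedMeasure Y => t s)
    (hΦ.transferDensity_smul hlam c (fun _ => 1))
  rw [hsplit, hΦ.transferDensity_add hlam ((integrable_const c).sub hf) hf, add_apply, smul_apply,
    smul_eq_mul] at h
  linarith

theorem abs_transferDensity_apply_le (hΦ : IsLinearTransfunction Φ)
    (hpos : ∀ a : AC μ, 0 ≤ a.1 → 0 ≤ (Φ a).1) (hf : Integrable f lam) {c : ℝ}
    (hfc : ∀ᵐ x ∂lam, |f x| ≤ c) {s : Set Y} (hs : MeasurableSet s) :
    |transferDensity Φ hlam f s| ≤ c * transferDensity Φ hlam (fun _ => 1) s := by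
  have hneg : transferDensity Φ hlam (-f) s = -transferDensity Φ hlam f s := by
    rw [← neg_one_smul ℝ f, hΦ.transferDensity_smul, smul_apply, smul_eq_mul, neg_one_mul]
  have hle := hΦ.transferDensity_apply_le hlam hpos hf (hfc.mono fun x hx => le_of_abs_le hx) hs
  have hge := hΦ.transferDensity_apply_le hlam hpos hf.neg
    (hfc.mono fun x hx => neg_le.1 (neg_le_of_abs_le hx)) hs
  rw [hneg] at hge
  exact abs_le.2 ⟨by linarith, hle⟩

variable (p : ENNReal) [Fact (1 ≤ p)] in
noncomputable def transferDensityₗ (hΦ : IsLinearTransfunction Φ) :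
    Lp ℝ p lam →ₗ[ℝ] SignedMeasure Y where
  toFun f := transferDensity Φ hlam f
  map_add' f g := by
    rw [transferDensity_congr_ae Φ hlam (Lp.coeFn_add f g),
      hΦ.transferDensity_add hlam (Lp.integrable f) (Lp.integrable g)]
  map_smul' r f := by
    rw [transferDensity_congr_ae Φ hlam (Lp.coeFn_smul r f), hΦ.transferDensity_smul,
      RingHom.id_apply]

theorem range_transferDensityₗ_le (hΦ : IsLinearTransfunction Φ)
    (hpos : ∀ a : AC μ, 0 ≤ a.1 → 0 ≤ (Φ a).1) {ρ : Measure Y} [IsFiniteMeasure ρ]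
    (hρ : ρ.toSignedMeasure = transferDensity Φ hlam (fun _ => 1)) :
    LinearMap.range (hΦ.transferDensityₗ hlam ⊤) ≤ LinearMap.range (Lp.withDensityᵥₗ ⊤ ρ) := by
  rintro _ ⟨f, rfl⟩
  refine exists_Lp_top_withDensityᵥ_eq_of_abs_le (c := ‖f‖) fun s hs => ?_
  have hbound : ∀ᵐ x ∂lam, |f x| ≤ ‖f‖ := by simpa using Lp.ae_norm_le_norm_top f
  have h := hΦ.abs_transferDensity_apply_le hlam hpos (Lp.integrable f) hbound hs
  rwa [← hρ, Measure.toSignedMeasure_apply_measurable hs] at h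

end IsLinearTransfunction

end Transfunction

theorem stmt2_general {X Y : Type*} [MeasurableSpace X] [MeasurableSpace Y]
    (μ : Measure X) (ν : Measure Y)
    (Φ : AC μ → AC ν)
    (hadd : ∀ a b c : AC μ, c.1 = a.1 + b.1 → (Φ c).1 = (Φ a).1 + (Φ b).1)
    (hsmul : ∀ (r : ℝ) (a c : AC μ), c.1 = r • a.1 → (Φ c).1 = r • (Φ a).1)
    (hpos : ∀ a : AC μ, 0 ≤ a.1 → 0 ≤ (Φ a).1)
    (hpres : ∀ a : AC μ, (Φ a).1 Set.univ = a.1 Set.univ)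
    (lam : Measure X) [IsFiniteMeasure lam] (hlam : lam.toSignedMeasure ∈ AC μ) :
    -- `ρ := Φλ` is a (finite) positive measure
    0 ≤ (Φ ⟨lam.toSignedMeasure, hlam⟩).1 ∧
    -- for any finite positive measure `ρ` realizing `Φλ`, there is a Markov operator
    -- `T : L^∞(X,λ) → L^∞(Y,ρ)` with the stated property
    ∀ (ρ : Measure Y) [IsFiniteMeasure ρ],
      ρ.toSignedMeasure = (Φ ⟨lam.toSignedMeasure, hlam⟩).1 →
      ∃ T : Lp ℝ ⊤ lam →ₗ[ℝ] Lp ℝ ⊤ ρ,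
        -- T 1_X = 1_Y
        T (indicatorConstLp ⊤ MeasurableSet.univ (measure_ne_top lam _) (1 : ℝ)) =
          indicatorConstLp ⊤ MeasurableSet.univ (measure_ne_top ρ _) (1 : ℝ) ∧
        -- T is positive
        (∀ f : Lp ℝ ⊤ lam, 0 ≤ᵐ[lam] (f : X → ℝ) → 0 ≤ᵐ[ρ] (T f : Y → ℝ)) ∧
        -- T is integral-preserving
        (∀ f : Lp ℝ ⊤ lam, ∫ y, (T f : Y → ℝ) y ∂ρ = ∫ x, (f : X → ℝ) x ∂lam) ∧
        -- ∫_B T(1_A) dρ = Φ(1_A λ)(B)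
        (∀ (A : Set X) (hA : MeasurableSet A) (B : Set Y), MeasurableSet B →
          ∀ a : AC μ, a.1 = lam.withDensityᵥ (A.indicator fun _ => (1 : ℝ)) →
            ∫ y in B, (T (indicatorConstLp ⊤ hA (measure_ne_top lam A) (1 : ℝ)) : Y → ℝ) y ∂ρ =
              (Φ a).1 B) := by
  have hΦ : IsLinearTransfunction Φ := ⟨hadd, hsmul⟩
  refine ⟨hpos _ lam.zero_le_toSignedMeasure, fun ρ _ hρ => ?_⟩
  rw [← transferDensity_one Φ hlam] at hρ
  obtain ⟨T, hT⟩ := LinearMap.exists_comp_eq_of_range_le (Lp.withDensityᵥₗ_injective (m := ρ))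
    (hΦ.range_transferDensityₗ_le hlam hpos hρ)
  have hTf (f : Lp ℝ ⊤ lam) : ρ.withDensityᵥ (T f) = transferDensity Φ hlam f :=
    LinearMap.congr_fun hT f
  have hTf_apply (f : Lp ℝ ⊤ lam) {s : Set Y} (hs : MeasurableSet s) :
      ∫ y in s, (T f : Y → ℝ) y ∂ρ = transferDensity Φ hlam f s := by
    rw [← withDensityᵥ_apply (Lp.integrable _) hs, hTf]
  refine ⟨T, ?_, fun f hf => ?_, fun f => ?_, fun A hA B hB a ha => ?_⟩
  · apply Lp.withDensityᵥₗ_injective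
    change ρ.withDensityᵥ (T _) = ρ.withDensityᵥ _
    rw [hTf, indicatorConstLp_univ, indicatorConstLp_univ,
      transferDensity_congr_ae Φ hlam (Lp.coeFn_const ..),
      WithDensityᵥEq.congr_ae (Lp.coeFn_const ..)]
    exact (ρ.withDensityᵥ_one.trans hρ).symm
  · exact ae_nonneg_of_zero_le_withDensityᵥ (Lp.integrable _)
      (hTf f ▸ transferDensity_nonneg Φ hlam hpos hf)
  · rw [← setIntegral_univ, hTf_apply f .univ,
      transferDensity_apply_univ Φ hlam hpres (Lp.integrable f)]
  · rw [hTf_apply _ hB, transferDensity_of_eq Φ hlam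
      (ha.trans (WithDensityᵥEq.congr_ae indicatorConstLp_coeFn.symm))]

/-- Let `Φ : M_μ → M_ν` be a Markov transfunction (linear, total-variation
continuous, positive, measure-preserving).  Then for every finite positive measure `λ ∈ M_μ`,
the measure `ρ := Φλ` is a finite positive measure in `M_ν`, and there is a Markov operator
`T : L^∞(X,λ) → L^∞(Y,ρ)` with `∫_B T(1_A) dρ = Φ(1_A λ)(B)` for all measurable `A`, `B`. -/
theorem stmt2 {X Y : Type*} [MeasurableSpace X] [MeasurableSpace Y]
    (μ : Measure X) (ν : Measure Y) [IsFiniteMeasure μ] [IsFiniteMeasure ν]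
    (hμν : μ Set.univ = ν Set.univ)
    (Φ : AC μ → AC ν)
    (hadd : ∀ a b c : AC μ, c.1 = a.1 + b.1 → (Φ c).1 = (Φ a).1 + (Φ b).1)
    (hsmul : ∀ (r : ℝ) (a c : AC μ), c.1 = r • a.1 → (Φ c).1 = r • (Φ a).1)
    (hbdd : ∃ C : ℝ, ∀ a : AC μ, tv (Φ a).1 ≤ C * tv a.1)
    (hpos : ∀ a : AC μ, 0 ≤ a.1 → 0 ≤ (Φ a).1)
    (hpres : ∀ a : AC μ, (Φ a).1 Set.univ = a.1 Set.univ)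
    (lam : Measure X) [IsFiniteMeasure lam] (hlam : lam.toSignedMeasure ∈ AC μ) :
    -- `ρ := Φλ` is a (finite) positive measure
    0 ≤ (Φ ⟨lam.toSignedMeasure, hlam⟩).1 ∧
    -- for any finite positive measure `ρ` realizing `Φλ`, there is a Markov operator
    -- `T : L^∞(X,λ) → L^∞(Y,ρ)` with the stated property
    ∀ (ρ : Measure Y) [IsFiniteMeasure ρ],
      ρ.toSignedMeasure = (Φ ⟨lam.toSignedMeasure, hlam⟩).1 →
      ∃ T : Lp ℝ ⊤ lam →ₗ[ℝ] Lp ℝ ⊤ ρ,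
        -- T 1_X = 1_Y
        T (indicatorConstLp ⊤ MeasurableSet.univ (measure_ne_top lam _) (1 : ℝ)) =
          indicatorConstLp ⊤ MeasurableSet.univ (measure_ne_top ρ _) (1 : ℝ) ∧
        -- T is positive
        (∀ f : Lp ℝ ⊤ lam, 0 ≤ᵐ[lam] (f : X → ℝ) → 0 ≤ᵐ[ρ] (T f : Y → ℝ)) ∧
        -- T is integral-preserving
        (∀ f : Lp ℝ ⊤ lam, ∫ y, (T f : Y → ℝ) y ∂ρ = ∫ x, (f : X → ℝ) x ∂lam) ∧
        -- ∫_B T(1_A) dρ = Φ(1_A λ)(B)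
        (∀ (A : Set X) (hA : MeasurableSet A) (B : Set Y), MeasurableSet B →
          ∀ a : AC μ, a.1 = lam.withDensityᵥ (A.indicator fun _ => (1 : ℝ)) →
            ∫ y in B, (T (indicatorConstLp ⊤ hA (measure_ne_top lam A) (1 : ℝ)) : Y → ℝ) y ∂ρ =
              (Φ a).1 B) :=
  stmt2_general μ ν Φ hadd hsmul hpos hpres lam hlam
end

section
/- Let X and Y be locally compact Polish spaces, and let Φ be a map from finite signed Borel measures on X to finite signed Borel measures on Y that is linear, bounded with respect to the total variation norms (with operator norm ‖Φ‖), and weakly continuous (if λ_n converges weakly to λ then Φλ_n converges weakly to Φλ). Then there exists a linear operator S : C_b(Y) → C_b(X) such that ∫_X S(g) dλ = ∫_Y g d(Φλ) for all g ∈ C_b(Y) and all finite signed Borel measures λ on X; moreover S is bounded with operator norm ‖S‖ = ‖Φ‖ (with respect to the uniform norms), and S is bounded-pointwise continuous: if g_n → g pointwise on Y with sup_n ‖g_n‖_∞ < ∞, then S(g_n) → S(g) pointwise on X with sup_n ‖S(g_n)‖_∞ < ∞. -/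
open MeasureTheory Filter Topology

/-- integral of a function against a finite signed measure (via the Jordan decomposition) -/
noncomputable def sint {Z : Type*} [MeasurableSpace Z] (s : SignedMeasure Z) (f : Z → ℝ) : ℝ :=
  ∫ z, f z ∂s.toJordanDecomposition.posPart - ∫ z, f z ∂s.toJordanDecomposition.negPart

/-!
The adjoint is `S g x = ∫ g d(Φ δₓ)`: it is continuous in `x` because `x ↦ δₓ` and `Φ` are weakly
continuous, and bounded by `‖Φ‖ ‖g‖`. The identity `∫ S g dλ = ∫ g d(Φ λ)` holds for finite
combinations of Dirac masses by linearity, and every finite measure on a separable metrizable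
space is a weak limit of such combinations (quantize along partitions into cells of vanishing
diameter, truncated to finitely many cells), so it holds for all `λ` by weak continuity of both
sides. Together with the duality `tv λ = sup_{‖g‖ ≤ 1} ∫ g dλ` it gives `‖S‖ = ‖Φ‖`, and
bounded-pointwise continuity is dominated convergence against `Φ δₓ`.
-/

open BoundedContinuousFunction TopologicalSpace

section TotalVariation

variable {Z : Type*} [MeasurableSpace Z]

lemma MeasureTheory.SignedMeasure.posPart_sub_negPart (s : SignedMeasure Z) :
    s.toJordanDecomposition.posPart.toSignedMeasure
      - s.toJordanDecomposition.negPart.toSignedMeasure = s :=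
  s.toSignedMeasure_toJordanDecomposition

lemma tv_eq (s : SignedMeasure Z) :
    tv s = s.toJordanDecomposition.posPart.real Set.univ
      + s.toJordanDecomposition.negPart.real Set.univ := by
  rw [tv, SignedMeasure.totalVariation, Measure.add_apply,
    ENNReal.toReal_add (measure_ne_top _ _) (measure_ne_top _ _)]
  rfl

lemma tv_nonneg (s : SignedMeasure Z) : 0 ≤ tv s := ENNReal.toReal_nonneg

lemma tv_dirac (z : Z) : tv (Measure.dirac z).toSignedMeasure = 1 := by
  have : (Measure.dirac z).toSignedMeasure.toJordanDecomposition =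
      ⟨Measure.dirac z, 0, .zero_right⟩ :=
    SignedMeasure.toJordanDecomposition_eq (by simp [JordanDecomposition.toSignedMeasure])
  simp [tv_eq, this]

end TotalVariation

section SignedIntegral

variable {Z : Type*} [MeasurableSpace Z] [TopologicalSpace Z]

lemma sint_smul (s : SignedMeasure Z) (r : ℝ) (f : Z →ᵇ ℝ) : sint s ⇑(r • f) = r * sint s f := by
  simp only [sint, coe_smul, smul_eq_mul, integral_const_mul]
  ring

variable [OpensMeasurableSpace Z]

lemma sint_toSignedMeasure_sub (μ ν : Measure Z) [IsFiniteMeasure μ] [IsFiniteMeasure ν]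
    (f : Z →ᵇ ℝ) :
    sint (μ.toSignedMeasure - ν.toSignedMeasure) f = ∫ z, f z ∂μ - ∫ z, f z ∂ν := by
  set j := (μ.toSignedMeasure - ν.toSignedMeasure).toJordanDecomposition
  -- `μ - ν = j⁺ - j⁻`, rearranged so that only sums of measures occur
  have key : μ + j.negPart = j.posPart + ν := by
    rw [← Measure.toSignedMeasure_eq_toSignedMeasure_iff, Measure.toSignedMeasure_add,
      Measure.toSignedMeasure_add]
    linear_combination (norm := abel)
      -SignedMeasure.posPart_sub_negPart (μ.toSignedMeasure - ν.toSignedMeasure)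
  have := congrArg (fun m => ∫ z, f z ∂m) key
  simp only [integral_add_measure (f.integrable _) (f.integrable _)] at this
  rw [sint]
  linarith

lemma sint_toSignedMeasure (μ : Measure Z) [IsFiniteMeasure μ] (f : Z →ᵇ ℝ) :
    sint μ.toSignedMeasure f = ∫ z, f z ∂μ := by
  simpa using sint_toSignedMeasure_sub μ 0 f

lemma sint_add_measure (s t : SignedMeasure Z) (f : Z →ᵇ ℝ) :
    sint (s + t) f = sint s f + sint t f := by
  set js := s.toJordanDecomposition
  set jt := t.toJordanDecomposition
  have hst : s + t = (js.posPart + jt.posPart).toSignedMeasure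
      - (js.negPart + jt.negPart).toSignedMeasure := by
    rw [Measure.toSignedMeasure_add, Measure.toSignedMeasure_add]
    linear_combination (norm := abel)
      -SignedMeasure.posPart_sub_negPart s - SignedMeasure.posPart_sub_negPart t
  rw [hst, sint_toSignedMeasure_sub, integral_add_measure (f.integrable _) (f.integrable _),
    integral_add_measure (f.integrable _) (f.integrable _), sint, sint]
  ring

lemma sint_neg_measure (s : SignedMeasure Z) (f : Z →ᵇ ℝ) : sint (-s) f = -sint s f := by
  have h : -s = s.toJordanDecomposition.negPart.toSignedMeasure
      - s.toJordanDecomposition.posPart.toSignedMeasure := by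
    linear_combination (norm := module) SignedMeasure.posPart_sub_negPart s
  rw [h, sint_toSignedMeasure_sub, sint]
  ring

lemma sint_smul_measure (r : ℝ) (s : SignedMeasure Z) (f : Z →ᵇ ℝ) :
    sint (r • s) f = r * sint s f := by
  wlog hr : 0 ≤ r generalizing r
  · rw [show r • s = -((-r) • s) by rw [show (-r) • s = -(r • s) from neg_smul r s, neg_neg],
      sint_neg_measure, this (-r) (by linarith)]
    ring
  have h : r • s = (r.toNNReal • s.toJordanDecomposition.posPart).toSignedMeasure
      - (r.toNNReal • s.toJordanDecomposition.negPart).toSignedMeasure := by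
    rw [Measure.toSignedMeasure_smul, Measure.toSignedMeasure_smul, NNReal.smul_def,
      NNReal.smul_def, Real.coe_toNNReal _ hr]
    conv_lhs => rw [← SignedMeasure.posPart_sub_negPart s]
    exact smul_sub _ _ _
  rw [h, sint_toSignedMeasure_sub, integral_smul_nnreal_measure, integral_smul_nnreal_measure,
    sint, NNReal.smul_def, NNReal.smul_def, Real.coe_toNNReal _ hr, smul_eq_mul, smul_eq_mul]
  ring

noncomputable def sintₗ (f : Z →ᵇ ℝ) : SignedMeasure Z →ₗ[ℝ] ℝ where
  toFun s := sint s f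
  map_add' s t := sint_add_measure s t f
  map_smul' r s := sint_smul_measure r s f

@[simp]
lemma sintₗ_apply (f : Z →ᵇ ℝ) (s : SignedMeasure Z) : sintₗ f s = sint s f := rfl

lemma sint_sub_measure (s t : SignedMeasure Z) (f : Z →ᵇ ℝ) :
    sint (s - t) f = sint s f - sint t f :=
  map_sub (sintₗ f) s t

lemma sint_add (s : SignedMeasure Z) (f g : Z →ᵇ ℝ) : sint s ⇑(f + g) = sint s f + sint s g := by
  simp only [sint, coe_add, Pi.add_apply, integral_add (f.integrable _) (g.integrable _)]
  ring

lemma sint_dirac (z : Z) (f : Z →ᵇ ℝ) : sint (Measure.dirac z).toSignedMeasure f = f z := by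
  rw [sint_toSignedMeasure, integral_dirac' _ _ f.continuous.stronglyMeasurable]

lemma abs_sint_le (s : SignedMeasure Z) (f : Z →ᵇ ℝ) : |sint s f| ≤ ‖f‖ * tv s := by
  have hp := norm_integral_le_mul_norm s.toJordanDecomposition.posPart f
  have hn := norm_integral_le_mul_norm s.toJordanDecomposition.negPart f
  rw [Real.norm_eq_abs] at hp hn
  rw [sint, tv_eq]
  linarith [abs_sub (∫ z, f z ∂s.toJordanDecomposition.posPart)
    (∫ z, f z ∂s.toJordanDecomposition.negPart)]

end SignedIntegral

section Duality

lemma exists_isClosed_subset_measureReal_compl_le {Z : Type*} [TopologicalSpace Z]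
    [MeasurableSpace Z] [OpensMeasurableSpace Z] (μ : Measure Z) [IsFiniteMeasure μ]
    [μ.WeaklyRegular] {A : Set Z} (hA : MeasurableSet A) (hAc : μ Aᶜ = 0) {ε : ℝ}
    (hε : 0 < ε) : ∃ F ⊆ A, IsClosed F ∧ μ.real Fᶜ ≤ ε := by
  obtain ⟨F, hFA, hF, hμ⟩ := hA.exists_isClosed_sdiff_lt (measure_ne_top μ A)
    (ENNReal.ofReal_pos.2 hε).ne'
  refine ⟨F, hFA, hF, ENNReal.toReal_le_of_le_ofReal hε.le ?_⟩
  calc μ Fᶜ ≤ μ (A \ F ∪ Aᶜ) := measure_mono fun z hz => by by_cases h : z ∈ A <;> simp_all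
    _ ≤ μ (A \ F) + μ Aᶜ := measure_union_le _ _
    _ ≤ ENNReal.ofReal ε := by rw [hAc, add_zero]; exact hμ.le

lemma measureReal_univ_sub_le_integral {Z : Type*} [TopologicalSpace Z] [MeasurableSpace Z]
    [OpensMeasurableSpace Z] (μ : Measure Z) [IsFiniteMeasure μ] {g : Z →ᵇ ℝ} (hg : ‖g‖ ≤ 1)
    {F : Set Z} (hF : MeasurableSet F) (hgF : Set.EqOn g 1 F) :
    μ.real Set.univ - 2 * μ.real Fᶜ ≤ ∫ z, g z ∂μ := by
  have hle : ∀ z, 1 - g z ≤ Fᶜ.indicator (fun _ => (2 : ℝ)) z := by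
    intro z
    by_cases hz : z ∈ F
    · simp [hgF hz, Set.indicator_nonneg]
    · have := (abs_le.1 ((g.norm_coe_le_norm z).trans hg)).1
      simp only [Set.indicator_of_mem (Set.mem_compl hz)]
      linarith
  have : ∫ z, (1 - g z) ∂μ ≤ ∫ z, Fᶜ.indicator (fun _ => (2 : ℝ)) z ∂μ :=
    integral_mono ((integrable_const 1).sub (g.integrable μ))
      ((integrable_const 2).indicator hF.compl) hle
  rw [integral_sub (integrable_const 1) (g.integrable μ), integral_indicator_const _ hF.compl,
    integral_const, smul_eq_mul, smul_eq_mul, mul_one] at this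
  linarith

variable {Z : Type*} [TopologicalSpace Z] [PseudoMetrizableSpace Z]
  [MeasurableSpace Z] [BorelSpace Z]

/-- `g` is an Urysohn function separating closed cores of the two halves of a Hahn
decomposition of `s`. -/
lemma exists_norm_le_one_tv_sub_le_sint (s : SignedMeasure Z) {ε : ℝ} (hε : 0 < ε) :
    ∃ g : Z →ᵇ ℝ, ‖g‖ ≤ 1 ∧ tv s - ε ≤ sint s g := by
  set p := s.toJordanDecomposition.posPart
  set n := s.toJordanDecomposition.negPart
  obtain ⟨A, hA, hpA, hnA⟩ := s.toJordanDecomposition.mutuallySingular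
  obtain ⟨Fp, hFpA, hFp, hp⟩ := exists_isClosed_subset_measureReal_compl_le p hA.compl
    (by rwa [compl_compl]) (by positivity : 0 < ε / 4)
  obtain ⟨Fn, hFnA, hFn, hn⟩ := exists_isClosed_subset_measureReal_compl_le n hA hnA
    (by positivity : 0 < ε / 4)
  obtain ⟨g, hgn, hgp, hg⟩ := exists_bounded_mem_Icc_of_closed_of_le hFn hFp
    (Set.disjoint_of_subset hFnA hFpA disjoint_compl_right) (by norm_num : (-1 : ℝ) ≤ 1)
  have hg1 : ‖g‖ ≤ 1 := (norm_le zero_le_one).2 fun z => abs_le.2 (hg z)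
  have hpg := measureReal_univ_sub_le_integral p hg1 hFp.measurableSet hgp
  have hng := measureReal_univ_sub_le_integral n (g := -g) (by rwa [norm_neg])
    hFn.measurableSet fun z hz => by simp [hgn hz]
  simp only [coe_neg, Pi.neg_apply, integral_neg] at hng
  refine ⟨g, hg1, ?_⟩
  rw [sint, tv_eq]
  linarith

end Duality

lemma exists_tsum_measure_le_ne_top {Z : Type*} [MeasurableSpace Z] (μ : Measure Z)
    [IsFiniteMeasure μ] {ι : ℕ → Z → ℕ} (hι : ∀ k, Measurable (ι k)) :
    ∃ m : ℕ → ℕ, ∑' k, μ {z | m k ≤ ι k z} ≠ ⊤ := by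
  obtain ⟨ε, hε, hsum⟩ := ENNReal.exists_pos_sum_of_countable one_ne_zero ℕ
  have hsmall : ∀ k, ∃ m, μ {z | m ≤ ι k z} < ε k := by
    intro k
    have hempty : ⋂ m, {z | m ≤ ι k z} = ∅ :=
      Set.eq_empty_of_forall_notMem fun z hz => by simpa using Set.mem_iInter.1 hz (ι k z + 1)
    have hlim : Tendsto (fun m => μ {z | m ≤ ι k z}) atTop (𝓝 0) := by
      have := tendsto_measure_iInter_atTop (μ := μ)
        (fun m => (measurableSet_le measurable_const (hι k)).nullMeasurableSet)
        (fun a b hab z hz => le_trans hab hz) ⟨0, measure_ne_top _ _⟩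
      rwa [hempty, measure_empty] at this
    exact (hlim.eventually (gt_mem_nhds (ENNReal.coe_pos.2 (hε k)))).exists
  choose m hm using hsmall
  exact ⟨m, ne_top_of_le_ne_top (hsum.trans ENNReal.one_lt_top).ne
    (ENNReal.tsum_le_tsum fun k => (hm k).le)⟩

section Approximation

variable {Z : Type*} [MeasurableSpace Z] [TopologicalSpace Z]

def WeakTendsto (ν : ℕ → SignedMeasure Z) (s : SignedMeasure Z) : Prop :=
  ∀ f : Z →ᵇ ℝ, Tendsto (fun n => sint (ν n) f) atTop (𝓝 (sint s f))

def diracSpan (Z : Type*) [MeasurableSpace Z] : Submodule ℝ (SignedMeasure Z) :=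
  Submodule.span ℝ (Set.range fun z : Z => (Measure.dirac z).toSignedMeasure)

variable [OpensMeasurableSpace Z]

lemma WeakTendsto.sub {ν₁ ν₂ : ℕ → SignedMeasure Z} {s₁ s₂ : SignedMeasure Z}
    (h₁ : WeakTendsto ν₁ s₁) (h₂ : WeakTendsto ν₂ s₂) : WeakTendsto (ν₁ - ν₂) (s₁ - s₂) :=
  fun f => by simpa only [Pi.sub_apply, sint_sub_measure] using (h₁ f).sub (h₂ f)

lemma weakTendsto_dirac {x : ℕ → Z} {z : Z} (h : Tendsto x atTop (𝓝 z)) :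
    WeakTendsto (fun n => (Measure.dirac (x n)).toSignedMeasure)
      (Measure.dirac z).toSignedMeasure :=
  fun f => by simp only [sint_dirac]; exact (f.continuous.tendsto z).comp h

lemma integral_ite_lt_eq_sint_sum (μ : Measure Z) [IsFiniteMeasure μ] {ι : Z → ℕ}
    (hι : Measurable ι) (c : ℕ → Z) (m : ℕ) (f : Z →ᵇ ℝ) :
    ∫ z, (if ι z < m then f (c (ι z)) else 0) ∂μ =
      sint (∑ i ∈ Finset.range m,
        μ.real (ι ⁻¹' {i}) • (Measure.dirac (c i)).toSignedMeasure) f := by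
  have hsum : (fun z => if ι z < m then f (c (ι z)) else 0) =
      fun z => ∑ i ∈ Finset.range m, (ι ⁻¹' {i}).indicator (fun _ => f (c i)) z := by
    classical
    ext z
    simp [Set.indicator_apply]
  rw [hsum, integral_finsetSum _ fun i _ =>
    (integrable_const _).indicator (hι (measurableSet_singleton i)), ← sintₗ_apply, map_sum]
  simp [integral_indicator_const _ (hι (measurableSet_singleton _)), sint_dirac]

/-- `ι k z` is the cell of `z` at stage `k`, with representative point `c (ι k z)`; only the
cells `i < m k` are kept, and by Borel–Cantelli a.e. point eventually lies in a kept cell. -/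
lemma weakTendsto_quantization (μ : Measure Z) [IsFiniteMeasure μ] (c : ℕ → Z)
    {ι : ℕ → Z → ℕ} (hι : ∀ k, Measurable (ι k))
    (hc : ∀ z, Tendsto (fun k => c (ι k z)) atTop (𝓝 z)) (m : ℕ → ℕ)
    (hm : ∑' k, μ {z | m k ≤ ι k z} ≠ ⊤) :
    WeakTendsto (fun k => ∑ i ∈ Finset.range (m k),
      μ.real (ι k ⁻¹' {i}) • (Measure.dirac (c i)).toSignedMeasure) μ.toSignedMeasure := by
  intro f
  simp only [← integral_ite_lt_eq_sint_sum μ (hι _), sint_toSignedMeasure]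
  refine tendsto_integral_of_dominated_convergence (fun _ => ‖f‖) (fun k => ?_)
    (integrable_const _) (fun k => ae_of_all _ fun z => ?_) ?_
  · exact (Measurable.ite (measurableSet_lt (hι k) measurable_const)
      ((measurable_from_nat (f := fun i => f (c i))).comp (hι k))
      measurable_const).aestronglyMeasurable
  · split_ifs
    · exact f.norm_coe_le_norm _
    · simp
  · filter_upwards [ae_eventually_notMem hm] with z hz
    refine ((f.continuous.tendsto z).comp (hc z)).congr' ?_
    filter_upwards [hz] with k hk
    simp only [not_le] at hk
    simp [hk]

end Approximation

section SeparableMetrizable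

variable {Z : Type*} [TopologicalSpace Z] [PseudoMetrizableSpace Z] [SeparableSpace Z]
  [MeasurableSpace Z] [BorelSpace Z]

lemma exists_weakTendsto_diracSpan_toSignedMeasure (μ : Measure Z) [IsFiniteMeasure μ] :
    ∃ ν : ℕ → SignedMeasure Z, (∀ k, ν k ∈ diracSpan Z) ∧ WeakTendsto ν μ.toSignedMeasure := by
  rcases isEmpty_or_nonempty Z with hZ | hZ
  · refine ⟨0, fun _ => zero_mem _, fun f => ?_⟩
    simp [Subsingleton.elim μ 0]
  classical
  let := pseudoMetrizableSpacePseudoMetric Z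
  obtain ⟨u, hu⟩ := exists_dense_seq Z
  have hex : ∀ (k : ℕ) (z : Z), ∃ i, dist z (u i) < 1 / (k + 1) :=
    fun k z => hu.exists_dist_lt z (by positivity)
  set ι : ℕ → Z → ℕ := fun k z => Nat.find (hex k z)
  have hι : ∀ k, Measurable (ι k) := fun k => measurable_find (hex k) fun i =>
    measurableSet_lt (measurable_id.dist measurable_const) measurable_const
  have hc : ∀ z, Tendsto (fun k => u (ι k z)) atTop (𝓝 z) := fun z =>
    tendsto_iff_dist_tendsto_zero.2 <| squeeze_zero (fun _ => dist_nonneg)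
      (fun k => (dist_comm _ z).trans_le (Nat.find_spec (hex k z)).le)
      tendsto_one_div_add_atTop_nhds_zero_nat
  obtain ⟨m, hm⟩ := exists_tsum_measure_le_ne_top μ hι
  exact ⟨_, fun k => Submodule.sum_mem _ fun i _ => Submodule.smul_mem _ _
    (Submodule.subset_span ⟨u i, rfl⟩), weakTendsto_quantization μ u hι hc m hm⟩

lemma exists_weakTendsto_diracSpan (s : SignedMeasure Z) :
    ∃ ν : ℕ → SignedMeasure Z, (∀ k, ν k ∈ diracSpan Z) ∧ WeakTendsto ν s := by
  obtain ⟨ν₁, h₁, hν₁⟩ :=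
    exists_weakTendsto_diracSpan_toSignedMeasure s.toJordanDecomposition.posPart
  obtain ⟨ν₂, h₂, hν₂⟩ :=
    exists_weakTendsto_diracSpan_toSignedMeasure s.toJordanDecomposition.negPart
  refine ⟨ν₁ - ν₂, fun k => sub_mem (h₁ k) (h₂ k), ?_⟩
  simpa only [SignedMeasure.posPart_sub_negPart] using hν₁.sub hν₂

lemma linearMap_ext_of_weakTendsto {L₁ L₂ : SignedMeasure Z →ₗ[ℝ] ℝ}
    (h₁ : ∀ ν s, WeakTendsto ν s → Tendsto (fun k => L₁ (ν k)) atTop (𝓝 (L₁ s)))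
    (h₂ : ∀ ν s, WeakTendsto ν s → Tendsto (fun k => L₂ (ν k)) atTop (𝓝 (L₂ s)))
    (h : ∀ z, L₁ (Measure.dirac z).toSignedMeasure = L₂ (Measure.dirac z).toSignedMeasure) :
    L₁ = L₂ := by
  have hspan : diracSpan Z ≤ LinearMap.eqLocus L₁ L₂ :=
    Submodule.span_le.2 (Set.range_subset_iff.2 h)
  refine LinearMap.ext fun s => ?_
  obtain ⟨ν, hν, hlim⟩ := exists_weakTendsto_diracSpan s
  have hL : (fun k => L₁ (ν k)) = fun k => L₂ (ν k) := funext fun k => hspan (hν k)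
  exact tendsto_nhds_unique (h₁ ν s hlim) (hL ▸ h₂ ν s hlim)

end SeparableMetrizable

lemma tendsto_sint_of_tendsto_pointwise {Z : Type*} [MeasurableSpace Z] [TopologicalSpace Z]
    [OpensMeasurableSpace Z] (s : SignedMeasure Z) {gs : ℕ → Z →ᵇ ℝ} {g : Z →ᵇ ℝ}
    (hg : ∀ z, Tendsto (fun n => gs n z) atTop (𝓝 (g z))) {M : ℝ} (hM : ∀ n, ‖gs n‖ ≤ M) :
    Tendsto (fun n => sint s (gs n)) atTop (𝓝 (sint s g)) := by
  have key (μ : Measure Z) [IsFiniteMeasure μ] :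
      Tendsto (fun n => ∫ z, gs n z ∂μ) atTop (𝓝 (∫ z, g z ∂μ)) :=
    tendsto_integral_of_dominated_convergence (fun _ => M)
      (fun n => (gs n).continuous.aestronglyMeasurable) (integrable_const M)
      (fun n => ae_of_all _ fun z => ((gs n).norm_coe_le_norm z).trans (hM n)) (ae_of_all _ hg)
  exact (key _).sub (key _)

lemma abs_sint_comp_dirac_le {X Y : Type*} [MeasurableSpace X] [TopologicalSpace Y]
    [MeasurableSpace Y] [OpensMeasurableSpace Y] {Φ : SignedMeasure X → SignedMeasure Y} {C : ℝ}
    (hC : ∀ s, tv (Φ s) ≤ C * tv s) (g : Y →ᵇ ℝ) (x : X) :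
    |sint (Φ (Measure.dirac x).toSignedMeasure) g| ≤ C * ‖g‖ :=
  calc |sint (Φ (Measure.dirac x).toSignedMeasure) g|
      ≤ ‖g‖ * tv (Φ (Measure.dirac x).toSignedMeasure) := abs_sint_le _ _
    _ ≤ ‖g‖ * C := mul_le_mul_of_nonneg_left
        (by simpa [tv_dirac] using hC (Measure.dirac x).toSignedMeasure) (norm_nonneg g)
    _ = C * ‖g‖ := mul_comm _ _

section Adjoint

variable {X Y : Type*} [TopologicalSpace X] [SequentialSpace X] [MeasurableSpace X]
  [OpensMeasurableSpace X] [TopologicalSpace Y] [MeasurableSpace Y]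
  {Φ : SignedMeasure X → SignedMeasure Y}

lemma continuous_sint_comp_dirac
    (hwc : ∀ ν s, WeakTendsto ν s → WeakTendsto (fun n => Φ (ν n)) (Φ s)) (g : Y →ᵇ ℝ) :
    Continuous fun x => sint (Φ (Measure.dirac x).toSignedMeasure) g :=
  continuous_iff_seqContinuous.2 fun _ _ hx => hwc _ _ (weakTendsto_dirac hx) g

variable [OpensMeasurableSpace Y]

noncomputable def diracAdjoint
    (hwc : ∀ ν s, WeakTendsto ν s → WeakTendsto (fun n => Φ (ν n)) (Φ s)) {C : ℝ}
    (hC : ∀ s, tv (Φ s) ≤ C * tv s) : (Y →ᵇ ℝ) →ₗ[ℝ] (X →ᵇ ℝ) where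
  toFun g := .ofNormedAddCommGroup (fun x => sint (Φ (Measure.dirac x).toSignedMeasure) g)
    (continuous_sint_comp_dirac hwc g) (C * ‖g‖) (abs_sint_comp_dirac_le hC g)
  map_add' g h := by ext x; exact sint_add _ g h
  map_smul' r g := by ext x; exact sint_smul _ r g

variable {hwc : ∀ ν s, WeakTendsto ν s → WeakTendsto (fun n => Φ (ν n)) (Φ s)} {C : ℝ}
  {hC : ∀ s, tv (Φ s) ≤ C * tv s}

lemma diracAdjoint_apply (g : Y →ᵇ ℝ) (x : X) :
    diracAdjoint hwc hC g x = sint (Φ (Measure.dirac x).toSignedMeasure) g :=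
  rfl

lemma norm_diracAdjoint_le {C' : ℝ} (hC' : 0 ≤ C') (hΦ : ∀ s, tv (Φ s) ≤ C' * tv s)
    (g : Y →ᵇ ℝ) : ‖diracAdjoint hwc hC g‖ ≤ C' * ‖g‖ :=
  (norm_le (mul_nonneg hC' (norm_nonneg g))).2 (abs_sint_comp_dirac_le hΦ g)

lemma sint_diracAdjoint [PseudoMetrizableSpace X] [SeparableSpace X] [BorelSpace X]
    (hadd : ∀ s t, Φ (s + t) = Φ s + Φ t) (hsmul : ∀ (r : ℝ) s, Φ (r • s) = r • Φ s)
    (g : Y →ᵇ ℝ) (s : SignedMeasure X) : sint s (diracAdjoint hwc hC g) = sint (Φ s) g := by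
  let Φₗ : SignedMeasure X →ₗ[ℝ] SignedMeasure Y := ⟨⟨Φ, hadd⟩, hsmul⟩
  have := linearMap_ext_of_weakTendsto (L₁ := sintₗ (diracAdjoint hwc hC g))
    (L₂ := sintₗ g ∘ₗ Φₗ) (fun ν s h => h (diracAdjoint hwc hC g)) (fun ν s h => hwc ν s h g)
    fun x => by simp [Φₗ, sint_dirac, diracAdjoint_apply]
  exact LinearMap.congr_fun this s

lemma tv_le_of_norm_diracAdjoint_le [PseudoMetrizableSpace X] [SeparableSpace X] [BorelSpace X]
    [PseudoMetrizableSpace Y] [BorelSpace Y]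
    (hadd : ∀ s t, Φ (s + t) = Φ s + Φ t) (hsmul : ∀ (r : ℝ) s, Φ (r • s) = r • Φ s) {C' : ℝ}
    (hC' : 0 ≤ C') (hS : ∀ g, ‖diracAdjoint hwc hC g‖ ≤ C' * ‖g‖) (s : SignedMeasure X) :
    tv (Φ s) ≤ C' * tv s := by
  refine le_of_forall_pos_le_add fun ε hε => ?_
  obtain ⟨g, hg1, hg⟩ := exists_norm_le_one_tv_sub_le_sint (Φ s) hε
  have : sint (Φ s) g ≤ C' * tv s :=
    calc sint (Φ s) g = sint s (diracAdjoint hwc hC g) := (sint_diracAdjoint hadd hsmul g s).symm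
      _ ≤ ‖diracAdjoint hwc hC g‖ * tv s := (le_abs_self _).trans (abs_sint_le _ _)
      _ ≤ C' * tv s := mul_le_mul_of_nonneg_right
          ((hS g).trans (mul_le_of_le_one_right hC' hg1)) (tv_nonneg s)
  linarith

end Adjoint

theorem stmt7_general {X Y : Type*}
    [MetricSpace X] [TopologicalSpace.SeparableSpace X]
    [MeasurableSpace X] [BorelSpace X]
    [MetricSpace Y] [MeasurableSpace Y] [BorelSpace Y]
    (Φ : SignedMeasure X → SignedMeasure Y)
    (hadd : ∀ s t : SignedMeasure X, Φ (s + t) = Φ s + Φ t)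
    (hsmul : ∀ (r : ℝ) (s : SignedMeasure X), Φ (r • s) = r • Φ s)
    (hbdd : ∃ C : ℝ, ∀ s : SignedMeasure X, tv (Φ s) ≤ C * tv s)
    (hwc : ∀ (lams : ℕ → SignedMeasure X) (lam : SignedMeasure X),
      (∀ f : BoundedContinuousFunction X ℝ,
        Tendsto (fun n => sint (lams n) f) atTop (nhds (sint lam f))) →
      ∀ g : BoundedContinuousFunction Y ℝ,
        Tendsto (fun n => sint (Φ (lams n)) g) atTop (nhds (sint (Φ lam) g))) :
    ∃ S : BoundedContinuousFunction Y ℝ →ₗ[ℝ] BoundedContinuousFunction X ℝ,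
      -- S is the Radon adjoint of Φ
      (∀ (g : BoundedContinuousFunction Y ℝ) (lam : SignedMeasure X),
        sint lam (S g) = sint (Φ lam) g) ∧
      -- ‖S‖ = ‖Φ‖: a constant bounds Φ iff it bounds S
      (∀ C : ℝ, 0 ≤ C →
        ((∀ lam : SignedMeasure X, tv (Φ lam) ≤ C * tv lam) ↔
          ∀ g : BoundedContinuousFunction Y ℝ, ‖S g‖ ≤ C * ‖g‖)) ∧
      -- S is bounded-pointwise continuous
      (∀ (gs : ℕ → BoundedContinuousFunction Y ℝ) (g : BoundedContinuousFunction Y ℝ),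
        (∀ y : Y, Tendsto (fun n => gs n y) atTop (nhds (g y))) →
        (∃ M : ℝ, ∀ n, ‖gs n‖ ≤ M) →
        (∀ x : X, Tendsto (fun n => S (gs n) x) atTop (nhds (S g x))) ∧
          ∃ M : ℝ, ∀ n, ‖S (gs n)‖ ≤ M) := by
  obtain ⟨C, hC⟩ := hbdd
  have hC₀ : ∀ s, tv (Φ s) ≤ max C 0 * tv s := fun s =>
    (hC s).trans (mul_le_mul_of_nonneg_right (le_max_left C 0) (tv_nonneg s))
  refine ⟨diracAdjoint hwc hC, sint_diracAdjoint hadd hsmul, fun C' hC' =>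
    ⟨fun hΦ => norm_diracAdjoint_le hC' hΦ, tv_le_of_norm_diracAdjoint_le hadd hsmul hC'⟩,
    fun gs g hg ⟨M, hM⟩ => ⟨fun x => tendsto_sint_of_tendsto_pointwise _ hg hM, max C 0 * M,
      fun n => ?_⟩⟩
  exact (norm_diracAdjoint_le (le_max_right C 0) hC₀ (gs n)).trans
    (mul_le_mul_of_nonneg_left (hM n) (le_max_right C 0))

/-- Let `X`, `Y` be locally compact Polish spaces and let `Φ` be a linear,
total-variation bounded and weakly continuous map on finite signed Borel measures.  Then `Φ`
has a linear Radon adjoint `S : C_b(Y) → C_b(X)`, with equal operator norm (expressed by the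
equality of the sets of admissible bounds), and `S` is bounded-pointwise continuous. -/
theorem stmt7 {X Y : Type*}
    [MetricSpace X] [CompleteSpace X] [TopologicalSpace.SeparableSpace X]
    [LocallyCompactSpace X] [MeasurableSpace X] [BorelSpace X]
    [MetricSpace Y] [CompleteSpace Y] [TopologicalSpace.SeparableSpace Y]
    [LocallyCompactSpace Y] [MeasurableSpace Y] [BorelSpace Y]
    (Φ : SignedMeasure X → SignedMeasure Y)
    (hadd : ∀ s t : SignedMeasure X, Φ (s + t) = Φ s + Φ t)
    (hsmul : ∀ (r : ℝ) (s : SignedMeasure X), Φ (r • s) = r • Φ s)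
    (hbdd : ∃ C : ℝ, ∀ s : SignedMeasure X, tv (Φ s) ≤ C * tv s)
    (hwc : ∀ (lams : ℕ → SignedMeasure X) (lam : SignedMeasure X),
      (∀ f : BoundedContinuousFunction X ℝ,
        Tendsto (fun n => sint (lams n) f) atTop (nhds (sint lam f))) →
      ∀ g : BoundedContinuousFunction Y ℝ,
        Tendsto (fun n => sint (Φ (lams n)) g) atTop (nhds (sint (Φ lam) g))) :
    ∃ S : BoundedContinuousFunction Y ℝ →ₗ[ℝ] BoundedContinuousFunction X ℝ,
      -- S is the Radon adjoint of Φ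
      (∀ (g : BoundedContinuousFunction Y ℝ) (lam : SignedMeasure X),
        sint lam (S g) = sint (Φ lam) g) ∧
      -- ‖S‖ = ‖Φ‖: a constant bounds Φ iff it bounds S
      (∀ C : ℝ, 0 ≤ C →
        ((∀ lam : SignedMeasure X, tv (Φ lam) ≤ C * tv lam) ↔
          ∀ g : BoundedContinuousFunction Y ℝ, ‖S g‖ ≤ C * ‖g‖)) ∧
      -- S is bounded-pointwise continuous
      (∀ (gs : ℕ → BoundedContinuousFunction Y ℝ) (g : BoundedContinuousFunction Y ℝ),
        (∀ y : Y, Tendsto (fun n => gs n y) atTop (nhds (g y))) →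
        (∃ M : ℝ, ∀ n, ‖gs n‖ ≤ M) →
        (∀ x : X, Tendsto (fun n => S (gs n) x) atTop (nhds (S g x))) ∧
          ∃ M : ℝ, ∀ n, ‖S (gs n)‖ ≤ M) :=
  stmt7_general Φ hadd hsmul hbdd hwc
end

section
/- Let (X,d) be a locally compact Polish metric space with complete metric d, let c : X × X → [0,∞) be a continuous cost function with c(x,y) ≤ α d(x,y)^p for some constants α, p > 0, and let λ and ρ be finite positive compactly supported Borel measures on X with λ(X) = ρ(X). Then for every ε > 0 there exist finitely supported measures λ' = Σ_{i=1}^m a_i δ_{x_i} and ρ' = Σ_{i=1}^m b_i δ_{x_i} with a_i, b_i ≥ 0 and λ'(X) = ρ'(X) = λ(X), such that |C(λ,ρ) − C(λ',ρ')| < ε, where C(σ,τ) := inf{∫ c dπ : π ∈ Π(σ,τ)} denotes the optimal transport cost. -/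
open MeasureTheory Filter Topology ENNReal

/-- the optimal transport cost `C(σ,τ) = inf {∫ c dπ : π ∈ Π(σ,τ)}` -/
noncomputable def optCost {X : Type*} [MeasurableSpace X]
    (c : X × X → ℝ) (σ τ : Measure X) : ℝ≥0∞ :=
  ⨅ (π : Measure (X × X)) (_ : π.fst = σ ∧ π.snd = τ), ∫⁻ q, ENNReal.ofReal (c q) ∂π

/-!
Let `K` be a compact set carrying both `λ` and `ρ`, and `η > 0`. By uniform continuity of `c` on
`K × K` there is a simple function `T : X → X` mapping `K` into a finite subset of `K` with
`|c (T u, T v) - c (u, v)| < η` on `K × K`; the discretizations are `λ' = T_* λ` and `ρ' = T_* ρ`.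
Pushing a coupling of `λ, ρ` forward by `T × T` gives `C(λ', ρ') ≤ C(λ, ρ) + η λ(X)`. Conversely a
coupling `π'` of `λ', ρ'` is an atomic measure on the finite set `range T × range T`, and replacing
each atom `π' {(y, z)}` by `π' {(y, z)}` times the product of the normalized restrictions of `λ` to
`T ⁻¹' {y}` and of `ρ` to `T ⁻¹' {z}` gives a coupling of `λ, ρ`, whence
`C(λ, ρ) ≤ C(λ', ρ') + η λ(X)`. Both costs are finite since `c` is bounded on `K × K`.
-/

open Set ProbabilityTheory

namespace MeasureTheory.Measure

variable {α β : Type*} [MeasurableSpace α] [MeasurableSpace β] {π : Measure (α × β)}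

theorem ae_mem_prod_of_ae_fst_of_ae_snd {s : Set α} {t : Set β} (hs : ∀ᵐ a ∂π.fst, a ∈ s)
    (ht : ∀ᵐ b ∂π.snd, b ∈ t) : ∀ᵐ q ∂π, q ∈ s ×ˢ t :=
  (ae_of_ae_map measurable_fst.aemeasurable hs).and (ae_of_ae_map measurable_snd.aemeasurable ht)

theorem fst_map_prodMap {γ δ : Type*} [MeasurableSpace γ] [MeasurableSpace δ] {f : α → γ}
    {g : β → δ} (hf : Measurable f) (hg : Measurable g) :
    (π.map (Prod.map f g)).fst = π.fst.map f := by
  rw [fst, fst, map_map measurable_fst (hf.prodMap hg), map_map hf measurable_fst]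
  rfl

theorem snd_map_prodMap {γ δ : Type*} [MeasurableSpace γ] [MeasurableSpace δ] {f : α → γ}
    {g : β → δ} (hf : Measurable f) (hg : Measurable g) :
    (π.map (Prod.map f g)).snd = π.snd.map g := by
  rw [snd, snd, map_map measurable_snd (hf.prodMap hg), map_map hg measurable_snd]
  rfl

theorem measure_singleton_le_fst [MeasurableSingletonClass α] (q : α × β) :
    π {q} ≤ π.fst {q.1} := by
  rw [fst_apply (measurableSet_singleton _)]
  exact measure_mono fun p hp => by simp_all

theorem measure_singleton_le_snd [MeasurableSingletonClass β] (q : α × β) :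
    π {q} ≤ π.snd {q.2} := by
  rw [snd_apply (measurableSet_singleton _)]
  exact measure_mono fun p hp => by simp_all

variable [MeasurableSingletonClass α] [MeasurableSingletonClass β]

theorem fst_singleton_eq_sum {t : Finset β} (ht : ∀ᵐ q ∂π, q.2 ∈ t) (a : α) :
    π.fst {a} = ∑ b ∈ t, π {(a, b)} := by
  have hcells :
      Prod.fst ⁻¹' {a} ∩ Prod.snd ⁻¹' t = (({a} ×ˢ t : Finset (α × β)) : Set (α × β)) := by
    rw [Finset.coe_product, Finset.coe_singleton]; ext; simp
  rw [fst_apply (measurableSet_singleton a),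
    ← measure_inter_conull (show π (Prod.snd ⁻¹' t)ᶜ = 0 from ht), hcells,
    ← sum_measure_singleton, Finset.sum_product, Finset.sum_singleton]

theorem snd_singleton_eq_sum {s : Finset α} (hs : ∀ᵐ q ∂π, q.1 ∈ s) (b : β) :
    π.snd {b} = ∑ a ∈ s, π {(a, b)} := by
  have hcells :
      Prod.snd ⁻¹' {b} ∩ Prod.fst ⁻¹' s = ((s ×ˢ {b} : Finset (α × β)) : Set (α × β)) := by
    rw [Finset.coe_product, Finset.coe_singleton]; ext; simp [and_comm]
  rw [snd_apply (measurableSet_singleton b),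
    ← measure_inter_conull (show π (Prod.fst ⁻¹' s)ᶜ = 0 from hs), hcells,
    ← sum_measure_singleton, Finset.sum_product_right, Finset.sum_singleton]

end MeasureTheory.Measure

section OptCost

variable {X : Type*} [MeasurableSpace X] {c : X × X → ℝ} {σ τ : Measure X}

theorem optCost_le_lintegral (π : Measure (X × X)) (h₁ : π.fst = σ) (h₂ : π.snd = τ) :
    optCost c σ τ ≤ ∫⁻ q, ENNReal.ofReal (c q) ∂π :=
  iInf₂_le π ⟨h₁, h₂⟩

theorem le_optCost_add {A k : ℝ≥0∞}
    (h : ∀ π : Measure (X × X), π.fst = σ → π.snd = τ →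
      A ≤ (∫⁻ q, ENNReal.ofReal (c q) ∂π) + k) :
    A ≤ optCost c σ τ + k := by
  simp only [optCost, ENNReal.iInf_add]
  exact le_iInf₂ fun π hπ => h π hπ.1 hπ.2

theorem exists_fst_eq_snd_eq [IsFiniteMeasure τ] (hmass : σ univ = τ univ) :
    ∃ π : Measure (X × X), π.fst = σ ∧ π.snd = τ := by
  rcases eq_or_ne (τ univ) 0 with h | h
  · refine ⟨0, ?_, ?_⟩ <;> simp [Measure.measure_univ_eq_zero.1, h, hmass]
  · refine ⟨(τ univ)⁻¹ • σ.prod τ, ?_, ?_⟩ <;>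
      simp only [Measure.fst, Measure.snd, Measure.map_smul, Measure.map_fst_prod,
        Measure.map_snd_prod, smul_smul, hmass, ENNReal.inv_mul_cancel h (measure_ne_top τ _),
        one_smul]

theorem optCost_ne_top [IsFiniteMeasure σ] [IsFiniteMeasure τ] {K : Set X}
    (hc : BddAbove (c '' K ×ˢ K)) (hσ : ∀ᵐ u ∂σ, u ∈ K) (hτ : ∀ᵐ u ∂τ, u ∈ K)
    (hmass : σ univ = τ univ) : optCost c σ τ ≠ ⊤ := by
  obtain ⟨π, h₁, h₂⟩ := exists_fst_eq_snd_eq hmass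
  obtain ⟨B, hB⟩ := hc
  have hK : ∀ᵐ q ∂π, q ∈ K ×ˢ K := Measure.ae_mem_prod_of_ae_fst_of_ae_snd (h₁ ▸ hσ) (h₂ ▸ hτ)
  refine ne_top_of_le_ne_top ?_ ((optCost_le_lintegral π h₁ h₂).trans
    (lintegral_mono_ae (g := fun _ => ENNReal.ofReal B) (hK.mono fun q hq =>
      ofReal_le_ofReal (hB (mem_image_of_mem c hq)))))
  rw [lintegral_const, ← Measure.fst_univ, h₁]
  exact mul_ne_top ofReal_ne_top (measure_ne_top σ univ)

end OptCost

section Discretization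

variable {X : Type*} [MeasurableSpace X] {c : X × X → ℝ} {σ τ : Measure X} {K : Set X} {η : ℝ}

theorem optCost_map_le_add (hc : Measurable c) {T : X → X} (hT : Measurable T)
    (hσ : ∀ᵐ u ∂σ, u ∈ K) (hτ : ∀ᵐ u ∂τ, u ∈ K)
    (hcT : ∀ u ∈ K, ∀ v ∈ K, c (T u, T v) ≤ c (u, v) + η) :
    optCost c (σ.map T) (τ.map T) ≤ optCost c σ τ + ENNReal.ofReal η * σ univ := by
  refine le_optCost_add fun π h₁ h₂ => ?_
  have hK : ∀ᵐ q ∂π, q ∈ K ×ˢ K := Measure.ae_mem_prod_of_ae_fst_of_ae_snd (h₁ ▸ hσ) (h₂ ▸ hτ)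
  calc optCost c (σ.map T) (τ.map T)
      ≤ ∫⁻ q, ENNReal.ofReal (c q) ∂(π.map (Prod.map T T)) :=
        optCost_le_lintegral _ (by rw [Measure.fst_map_prodMap hT hT, h₁])
          (by rw [Measure.snd_map_prodMap hT hT, h₂])
    _ = ∫⁻ q, ENNReal.ofReal (c (T q.1, T q.2)) ∂π :=
        lintegral_map hc.ennreal_ofReal (hT.prodMap hT)
    _ ≤ ∫⁻ q, (ENNReal.ofReal (c q) + ENNReal.ofReal η) ∂π :=
        lintegral_mono_ae <| hK.mono fun q hq =>
          (ofReal_le_ofReal (hcT _ hq.1 _ hq.2)).trans ofReal_add_le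
    _ = (∫⁻ q, ENNReal.ofReal (c q) ∂π) + ENNReal.ofReal η * σ univ := by
        rw [lintegral_add_right _ measurable_const, lintegral_const, ← Measure.fst_univ, h₁]

theorem mul_cond_univ_of_le {μ : Measure X} [IsFiniteMeasure μ] {s : Set X} {a : ℝ≥0∞}
    (ha : a ≤ μ s) : a * μ[|s] univ = a := by
  rcases eq_or_ne (μ s) 0 with h | h
  · simp [nonpos_iff_eq_zero.1 (ha.trans h.le)]
  · have := cond_isProbabilityMeasure (μ := μ) h
    simp

theorem sum_smul_cond_preimage (T : SimpleFunc X X) (μ : Measure X) [IsFiniteMeasure μ] :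
    ∑ y ∈ T.range, μ (T ⁻¹' {y}) • μ[|T ⁻¹' {y}] = μ := by
  ext s hs
  simp only [Measure.coe_finsetSum, Finset.sum_apply, Measure.smul_apply, smul_eq_mul]
  simp_rw [mul_comm (μ _), cond_mul_eq_inter (T.measurableSet_fiber _)]
  simpa [Measure.restrict_apply (T.measurableSet_fiber _), inter_comm] using
    T.sum_range_measure_preimage_singleton (μ.restrict s)

theorem lintegral_cond_prod_cond_le (T : SimpleFunc X X) (hσ : ∀ᵐ u ∂σ, u ∈ K)
    (hτ : ∀ᵐ u ∂τ, u ∈ K) (hcT : ∀ u ∈ K, ∀ v ∈ K, c (u, v) ≤ c (T u, T v) + η) (q : X × X) :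
    ∫⁻ p, ENNReal.ofReal (c p) ∂(σ[|T ⁻¹' {q.1}]).prod (τ[|T ⁻¹' {q.2}]) ≤
      ENNReal.ofReal (c q) + ENNReal.ofReal η := by
  have h₁ : ∀ᵐ u ∂σ[|T ⁻¹' {q.1}], u ∈ K ∧ T u = q.1 := by
    filter_upwards [cond_absolutelyContinuous.ae_le hσ, ae_cond_mem (T.measurableSet_fiber _)]
      with u hu hTu using ⟨hu, hTu⟩
  have h₂ : ∀ᵐ v ∂τ[|T ⁻¹' {q.2}], v ∈ K ∧ T v = q.2 := by
    filter_upwards [cond_absolutelyContinuous.ae_le hτ, ae_cond_mem (T.measurableSet_fiber _)]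
      with v hv hTv using ⟨hv, hTv⟩
  have hle : ∀ᵐ p ∂(σ[|T ⁻¹' {q.1}]).prod (τ[|T ⁻¹' {q.2}]),
      ENNReal.ofReal (c p) ≤ ENNReal.ofReal (c q) + ENNReal.ofReal η := by
    filter_upwards [Measure.quasiMeasurePreserving_fst.ae h₁,
      Measure.quasiMeasurePreserving_snd.ae h₂] with p ⟨hu, hTu⟩ ⟨hv, hTv⟩
    refine (ofReal_le_ofReal ?_).trans ofReal_add_le
    simpa [hTu, hTv] using hcT _ hu _ hv
  calc _ ≤ ∫⁻ _, (ENNReal.ofReal (c q) + ENNReal.ofReal η)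
          ∂(σ[|T ⁻¹' {q.1}]).prod (τ[|T ⁻¹' {q.2}]) := lintegral_mono_ae hle
    _ ≤ (ENNReal.ofReal (c q) + ENNReal.ofReal η) * 1 := by
        rw [lintegral_const, ← univ_prod_univ, Measure.prod_prod]
        gcongr
        exact mul_le_one' prob_le_one prob_le_one
    _ = _ := mul_one _

variable [MeasurableSingletonClass X]

theorem ae_mem_range_map (T : SimpleFunc X X) (μ : Measure X) : ∀ᵐ y ∂μ.map T, y ∈ T.range :=
  (ae_map_iff T.measurable.aemeasurable T.range.measurableSet).2 (ae_of_all _ T.mem_range_self)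

noncomputable def liftCoupling (T : SimpleFunc X X) (σ τ : Measure X) (π' : Measure (X × X)) :
    Measure (X × X) :=
  ∑ q ∈ T.range ×ˢ T.range, π' {q} • (σ[|T ⁻¹' {q.1}]).prod (τ[|T ⁻¹' {q.2}])

variable (T : SimpleFunc X X) {π' : Measure (X × X)}

theorem lintegral_liftCoupling_le (hσ : ∀ᵐ u ∂σ, u ∈ K) (hτ : ∀ᵐ u ∂τ, u ∈ K)
    (hcT : ∀ u ∈ K, ∀ v ∈ K, c (u, v) ≤ c (T u, T v) + η)
    (hπ' : ∀ᵐ q ∂π', q ∈ T.range ×ˢ T.range) :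
    ∫⁻ q, ENNReal.ofReal (c q) ∂liftCoupling T σ τ π' ≤
      (∫⁻ q, ENNReal.ofReal (c q) ∂π') + ENNReal.ofReal η * π' univ := by
  have hπ'' : π'.restrict ↑(T.range ×ˢ T.range) = π' := Measure.restrict_eq_self_of_ae_mem hπ'
  calc ∫⁻ q, ENNReal.ofReal (c q) ∂liftCoupling T σ τ π'
      = ∑ q ∈ T.range ×ˢ T.range, π' {q} *
          ∫⁻ p, ENNReal.ofReal (c p) ∂(σ[|T ⁻¹' {q.1}]).prod (τ[|T ⁻¹' {q.2}]) := by
        simp only [liftCoupling, lintegral_finsetSum_measure, lintegral_smul_measure, smul_eq_mul]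
    _ ≤ ∑ q ∈ T.range ×ˢ T.range, π' {q} * (ENNReal.ofReal (c q) + ENNReal.ofReal η) := by
        gcongr with q
        exact lintegral_cond_prod_cond_le T hσ hτ hcT q
    _ = (∑ q ∈ T.range ×ˢ T.range, ENNReal.ofReal (c q) * π' {q}) +
          ENNReal.ofReal η * ∑ q ∈ T.range ×ˢ T.range, π' {q} := by
        simp only [mul_comm (π' _), add_mul, Finset.sum_add_distrib, Finset.mul_sum]
    _ = _ := by
        rw [← lintegral_finset, hπ'', sum_measure_singleton, ← Measure.restrict_apply_univ, hπ'']

variable [IsFiniteMeasure σ] [IsFiniteMeasure τ]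

theorem fst_liftCoupling (h₁ : π'.fst = σ.map T) (h₂ : π'.snd = τ.map T) :
    (liftCoupling T σ τ π').fst = σ := by
  have hR : ∀ᵐ q ∂π', q.2 ∈ T.range := ae_of_ae_map measurable_snd.aemeasurable
    (h₂.symm ▸ ae_mem_range_map T τ : ∀ᵐ y ∂π'.snd, y ∈ T.range)
  have hw (q : X × X) : π' {q} * τ[|T ⁻¹' {q.2}] univ = π' {q} := mul_cond_univ_of_le <| by
    simpa [h₂, Measure.map_apply T.measurable] using Measure.measure_singleton_le_snd (π := π') q
  rw [liftCoupling, Measure.fst, Measure.map_finset_sum measurable_fst.aemeasurable]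
  simp only [Measure.map_smul, Measure.map_fst_prod, smul_smul, hw, Finset.sum_product,
    ← Finset.sum_smul]
  convert sum_smul_cond_preimage T σ using 3 with y
  rw [← Measure.fst_singleton_eq_sum hR, h₁,
    Measure.map_apply T.measurable (measurableSet_singleton _)]

theorem snd_liftCoupling (h₁ : π'.fst = σ.map T) (h₂ : π'.snd = τ.map T) :
    (liftCoupling T σ τ π').snd = τ := by
  have hR : ∀ᵐ q ∂π', q.1 ∈ T.range := ae_of_ae_map measurable_fst.aemeasurable
    (h₁.symm ▸ ae_mem_range_map T σ : ∀ᵐ y ∂π'.fst, y ∈ T.range)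
  have hw (q : X × X) : π' {q} * σ[|T ⁻¹' {q.1}] univ = π' {q} := mul_cond_univ_of_le <| by
    simpa [h₁, Measure.map_apply T.measurable] using Measure.measure_singleton_le_fst (π := π') q
  rw [liftCoupling, Measure.snd, Measure.map_finset_sum measurable_snd.aemeasurable]
  simp only [Measure.map_smul, Measure.map_snd_prod, smul_smul, hw, Finset.sum_product_right,
    ← Finset.sum_smul]
  convert sum_smul_cond_preimage T τ using 3 with z
  rw [← Measure.snd_singleton_eq_sum hR, h₂,
    Measure.map_apply T.measurable (measurableSet_singleton _)]

theorem optCost_le_optCost_map_add (hσ : ∀ᵐ u ∂σ, u ∈ K) (hτ : ∀ᵐ u ∂τ, u ∈ K)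
    (hcT : ∀ u ∈ K, ∀ v ∈ K, c (u, v) ≤ c (T u, T v) + η) :
    optCost c σ τ ≤ optCost c (σ.map T) (τ.map T) + ENNReal.ofReal η * σ univ := by
  refine le_optCost_add fun π' h₁ h₂ => ?_
  have hπ' : ∀ᵐ q ∂π', q ∈ T.range ×ˢ T.range := by
    filter_upwards [Measure.ae_mem_prod_of_ae_fst_of_ae_snd
      (h₁ ▸ ae_mem_range_map T σ) (h₂ ▸ ae_mem_range_map T τ)] with q hq
    exact Finset.mem_product.2 hq
  calc optCost c σ τ ≤ ∫⁻ q, ENNReal.ofReal (c q) ∂liftCoupling T σ τ π' :=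
        optCost_le_lintegral _ (fst_liftCoupling T h₁ h₂) (snd_liftCoupling T h₁ h₂)
    _ ≤ _ := lintegral_liftCoupling_le T hσ hτ hcT hπ'
    _ = _ := by rw [← Measure.fst_univ, h₁, Measure.map_apply T.measurable .univ, preimage_univ]

end Discretization

section Approximation

variable {X : Type*} [PseudoMetricSpace X] [MeasurableSpace X] [OpensMeasurableSpace X]
  {K : Set X}

theorem exists_simpleFunc_dist_lt (hK : IsCompact K) {δ : ℝ} (hδ : 0 < δ) :
    ∃ T : SimpleFunc X X, ∀ u ∈ K, T u ∈ K ∧ dist (T u) u < δ := by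
  rcases K.eq_empty_or_nonempty with rfl | hKne
  · cases isEmpty_or_nonempty X
    · exact ⟨SimpleFunc.ofIsEmpty, by simp⟩
    · exact ⟨SimpleFunc.const X (Classical.arbitrary X), by simp⟩
  have := hKne.to_subtype
  have := hK.isSeparable.separableSpace
  obtain ⟨e, he⟩ := TopologicalSpace.exists_dense_seq K
  obtain ⟨s, hs⟩ := hK.elim_finite_subcover (fun k => Metric.ball (e k : X) δ)
    (fun _ => Metric.isOpen_ball) fun u hu => by
      obtain ⟨k, hk⟩ := Metric.denseRange_iff.1 he ⟨u, hu⟩ δ hδ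
      exact mem_iUnion.2 ⟨k, hk⟩
  refine ⟨SimpleFunc.nearestPt (fun k => e k) (s.sup id), fun u hu => ⟨(e _).2, ?_⟩⟩
  obtain ⟨k, hk, hku⟩ := mem_iUnion₂.1 (hs hu)
  have := SimpleFunc.edist_nearestPt_le (fun k => (e k : X)) u (Finset.le_sup (f := id) hk)
  rw [edist_dist, edist_dist, ofReal_le_ofReal_iff dist_nonneg] at this
  exact this.trans_lt (by rw [dist_comm]; exact Metric.mem_ball.1 hku)

theorem exists_simpleFunc_abs_sub_lt (hK : IsCompact K) {c : X × X → ℝ}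
    (hc : ContinuousOn c (K ×ˢ K)) {η : ℝ} (hη : 0 < η) :
    ∃ T : SimpleFunc X X, ∀ u ∈ K, ∀ v ∈ K, |c (T u, T v) - c (u, v)| < η := by
  obtain ⟨δ, hδ, hcδ⟩ :=
    Metric.uniformContinuousOn_iff.1 ((hK.prod hK).uniformContinuousOn_of_continuous hc) η hη
  obtain ⟨T, hT⟩ := exists_simpleFunc_dist_lt hK hδ
  refine ⟨T, fun u hu v hv => ?_⟩
  rw [← Real.dist_eq]
  exact hcδ _ ⟨(hT u hu).1, (hT v hv).1⟩ _ ⟨hu, hv⟩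
    (by rw [Prod.dist_eq]; exact max_lt (hT u hu).2 (hT v hv).2)

end Approximation

theorem exists_sum_dirac_eq_map {X : Type*} [MeasurableSpace X] [MeasurableSingletonClass X]
    (T : SimpleFunc X X) (σ τ : Measure X) [IsFiniteMeasure σ] [IsFiniteMeasure τ] :
    ∃ (m : ℕ) (x : Fin m → X) (a b : Fin m → ℝ), (∀ i, 0 ≤ a i) ∧ (∀ i, 0 ≤ b i) ∧
      ∑ i, ENNReal.ofReal (a i) • Measure.dirac (x i) = σ.map T ∧
      ∑ i, ENNReal.ofReal (b i) • Measure.dirac (x i) = τ.map T := by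
  let x (i : Fin T.range.card) : X := T.range.equivFin.symm i
  have key (μ : Measure X) [IsFiniteMeasure μ] :
      ∑ i, ENNReal.ofReal (μ (T ⁻¹' {x i})).toReal • Measure.dirac (x i) = μ.map T := by
    rw [(Measure.ae_mem_finset_iff_map_eq_sum_dirac T.measurable.aemeasurable).1
      (ae_of_all _ T.mem_range_self), ← Finset.sum_coe_sort T.range,
      ← T.range.equivFin.symm.sum_comp]
    simp_rw [ofReal_toReal (measure_ne_top _ _)]
    rfl
  exact ⟨_, x, _, _, fun _ => toReal_nonneg, fun _ => toReal_nonneg, key σ, key τ⟩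

theorem stmt16_general {X : Type*}
    [MetricSpace X] [TopologicalSpace.SeparableSpace X]
    [MeasurableSpace X] [BorelSpace X]
    (c : X × X → ℝ) (hc : Continuous c)
    (lam ρ : Measure X) [IsFiniteMeasure lam] [IsFiniteMeasure ρ]
    (hlamc : ∃ K : Set X, IsCompact K ∧ lam Kᶜ = 0)
    (hρc : ∃ K : Set X, IsCompact K ∧ ρ Kᶜ = 0)
    (hmass : lam Set.univ = ρ Set.univ) :
    ∀ ε : ℝ, 0 < ε →
      ∃ (m : ℕ) (x : Fin m → X) (a b : Fin m → ℝ),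
        (∀ i, 0 ≤ a i) ∧ (∀ i, 0 ≤ b i) ∧
        (∑ i, ENNReal.ofReal (a i) • Measure.dirac (x i)) Set.univ = lam Set.univ ∧
        (∑ i, ENNReal.ofReal (b i) • Measure.dirac (x i)) Set.univ = lam Set.univ ∧
        optCost c lam ρ <
          optCost c (∑ i, ENNReal.ofReal (a i) • Measure.dirac (x i))
            (∑ i, ENNReal.ofReal (b i) • Measure.dirac (x i)) + ENNReal.ofReal ε ∧
        optCost c (∑ i, ENNReal.ofReal (a i) • Measure.dirac (x i))
            (∑ i, ENNReal.ofReal (b i) • Measure.dirac (x i)) <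
          optCost c lam ρ + ENNReal.ofReal ε := by
  intro ε hε
  obtain ⟨K₁, hK₁, hlamK₁⟩ := hlamc
  obtain ⟨K₂, hK₂, hρK₂⟩ := hρc
  have hK : IsCompact (K₁ ∪ K₂) := hK₁.union hK₂
  have hlamK : ∀ᵐ u ∂lam, u ∈ K₁ ∪ K₂ :=
    measure_mono_null (compl_subset_compl.2 subset_union_left) hlamK₁
  have hρK : ∀ᵐ u ∂ρ, u ∈ K₁ ∪ K₂ :=
    measure_mono_null (compl_subset_compl.2 subset_union_right) hρK₂
  obtain ⟨η, hη, hηε⟩ : ∃ η : ℝ, 0 < η ∧ ENNReal.ofReal η * lam univ < ENNReal.ofReal ε := by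
    obtain ⟨η, hη, h⟩ :=
      ENNReal.exists_nnreal_pos_mul_lt (measure_ne_top lam univ) (ofReal_pos.2 hε).ne'
    exact ⟨η, hη, by rwa [ofReal_coe_nnreal]⟩
  obtain ⟨T, hT⟩ := exists_simpleFunc_abs_sub_lt hK hc.continuousOn hη
  have hC : optCost c lam ρ ≠ ⊤ :=
    optCost_ne_top ((hK.prod hK).bddAbove_image hc.continuousOn) hlamK hρK hmass
  have h₁ := optCost_map_le_add hc.measurable T.measurable hlamK hρK fun u hu v hv => by
    linarith [(abs_lt.1 (hT u hu v hv)).2]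
  have h₂ := optCost_le_optCost_map_add T hlamK hρK fun u hu v hv => by
    linarith [(abs_lt.1 (hT u hu v hv)).1]
  have hC' : optCost c (lam.map T) (ρ.map T) ≠ ⊤ :=
    ne_top_of_le_ne_top (add_ne_top.2 ⟨hC, mul_ne_top ofReal_ne_top (measure_ne_top _ _)⟩) h₁
  obtain ⟨m, x, a, b, ha, hb, hlam', hρ'⟩ := exists_sum_dirac_eq_map T lam ρ
  refine ⟨m, x, a, b, ha, hb, ?_, ?_, ?_, ?_⟩
  · rw [hlam', Measure.map_apply T.measurable .univ, preimage_univ]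
  · rw [hρ', Measure.map_apply T.measurable .univ, preimage_univ, hmass]
  · rw [hlam', hρ']
    exact h₂.trans_lt (ENNReal.add_lt_add_left hC' hηε)
  · rw [hlam', hρ']
    exact h₁.trans_lt (ENNReal.add_lt_add_left hC hηε)

/-- On a locally compact Polish metric space `X`, for a continuous cost
`c : X × X → [0,∞)` with `c(x,y) ≤ α d(x,y)^p` (`α, p > 0`) and finite positive compactly
supported measures `λ`, `ρ` of equal total mass, the optimal cost `C(λ,ρ)` is approximated
within any `ε > 0` by the optimal cost between finitely supported measures
`λ' = Σ a_i δ_{x_i}`, `ρ' = Σ b_i δ_{x_i}` of the same total mass. -/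
theorem stmt16 {X : Type*}
    [MetricSpace X] [CompleteSpace X] [TopologicalSpace.SeparableSpace X]
    [LocallyCompactSpace X] [MeasurableSpace X] [BorelSpace X]
    (c : X × X → ℝ) (hc : Continuous c) (hc0 : ∀ q, 0 ≤ c q)
    (α p : ℝ) (hα : 0 < α) (hp : 0 < p)
    (hcd : ∀ x y : X, c (x, y) ≤ α * dist x y ^ p)
    (lam ρ : Measure X) [IsFiniteMeasure lam] [IsFiniteMeasure ρ]
    (hlamc : ∃ K : Set X, IsCompact K ∧ lam Kᶜ = 0)
    (hρc : ∃ K : Set X, IsCompact K ∧ ρ Kᶜ = 0)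
    (hmass : lam Set.univ = ρ Set.univ) :
    ∀ ε : ℝ, 0 < ε →
      ∃ (m : ℕ) (x : Fin m → X) (a b : Fin m → ℝ),
        (∀ i, 0 ≤ a i) ∧ (∀ i, 0 ≤ b i) ∧
        (∑ i, ENNReal.ofReal (a i) • Measure.dirac (x i)) Set.univ = lam Set.univ ∧
        (∑ i, ENNReal.ofReal (b i) • Measure.dirac (x i)) Set.univ = lam Set.univ ∧
        optCost c lam ρ <
          optCost c (∑ i, ENNReal.ofReal (a i) • Measure.dirac (x i))
            (∑ i, ENNReal.ofReal (b i) • Measure.dirac (x i)) + ENNReal.ofReal ε ∧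
        optCost c (∑ i, ENNReal.ofReal (a i) • Measure.dirac (x i))
            (∑ i, ENNReal.ofReal (b i) • Measure.dirac (x i)) <
          optCost c lam ρ + ENNReal.ofReal ε :=
  stmt16_general c hc lam ρ hlamc hρc hmass
end

section
/- Let X and Y be Polish metric spaces, let μ and ν be finite positive Borel measures with μ(X) = ν(Y), and let κ_n, κ ∈ Π(μ,ν) with κ_n converging weakly to κ (∫ f dκ_n → ∫ f dκ for every bounded continuous f on X × Y). Then for every h ∈ L^∞(X,μ) and every bounded continuous g : Y → ℝ, one has ∫_{X×Y} h(x) g(y) dκ_n(x,y) → ∫_{X×Y} h(x) g(y) dκ(x,y). -/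
open MeasureTheory Filter Topology

/-!
Approximate `h` in `L¹(μ)` by a bounded continuous `f`. Since every coupling has first marginal
`μ`, replacing `h` by `f` moves `∫ h(x) g(y) dπ` by at most `‖g‖ ∫ |h - f| dμ` uniformly in the
coupling `π`, while for `f` convergence is the weak convergence tested against `f(x) g(y)`.
-/

lemma Metric.tendsto_of_forall_approx {α β : Type*} [PseudoMetricSpace β] {l : Filter α}
    {u : α → β} {a : β}
    (H : ∀ ε > 0, ∃ v : α → β, ∃ b, Tendsto v l (𝓝 b) ∧
      (∀ᶠ n in l, dist (u n) (v n) ≤ ε) ∧ dist a b ≤ ε) :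
    Tendsto u l (𝓝 a) := by
  refine Metric.tendsto_nhds.2 fun ε hε => ?_
  obtain ⟨v, b, hvb, huv, hab⟩ := H (ε / 4) (by positivity)
  filter_upwards [huv, Metric.tendsto_nhds.1 hvb (ε / 4) (by positivity)] with n hun hvn
  calc dist (u n) a ≤ dist (u n) (v n) + dist (v n) b + dist a b := by
        rw [dist_comm a b]; exact dist_triangle4 _ _ _ _
    _ < ε := by linarith

namespace MeasureTheory.Measure

variable {X Y : Type*} [MeasurableSpace X] [MeasurableSpace Y] {π : Measure (X × Y)}
  {μ : Measure X}

lemma integrable_comp_fst_of_fst_eq {φ : X → ℝ} (hπ : π.fst = μ) (hφ : Integrable φ μ) :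
    Integrable (fun z => φ z.1) π :=
  Integrable.comp_measurable (by rwa [← Measure.fst, hπ]) measurable_fst

lemma integral_comp_fst_of_fst_eq {φ : X → ℝ} (hπ : π.fst = μ) (hφ : AEStronglyMeasurable φ μ) :
    ∫ z, φ z.1 ∂π = ∫ x, φ x ∂μ := by
  rw [← hπ, Measure.fst, integral_map measurable_fst.aemeasurable]
  rwa [← Measure.fst, hπ]

variable [TopologicalSpace Y]

lemma integrable_comp_fst_mul_of_fst_eq [OpensMeasurableSpace Y] {φ : X → ℝ} (hπ : π.fst = μ)
    (hφ : Integrable φ μ) (g : BoundedContinuousFunction Y ℝ) :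
    Integrable (fun z => φ z.1 * g z.2) π :=
  (integrable_comp_fst_of_fst_eq hπ hφ).mul_bdd
    (g.continuous.measurable.comp measurable_snd).aestronglyMeasurable
    (ae_of_all _ fun z => g.norm_coe_le_norm z.2)

lemma norm_integral_comp_fst_mul_le_of_fst_eq {φ : X → ℝ} (hπ : π.fst = μ) (hφ : Integrable φ μ)
    (g : BoundedContinuousFunction Y ℝ) :
    ‖∫ z, φ z.1 * g z.2 ∂π‖ ≤ ‖g‖ * ∫ x, ‖φ x‖ ∂μ := by
  calc ‖∫ z, φ z.1 * g z.2 ∂π‖ ≤ ∫ z, ‖g‖ * ‖φ z.1‖ ∂π := by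
        refine norm_integral_le_of_norm_le ((integrable_comp_fst_of_fst_eq hπ hφ).norm.const_mul _)
          (ae_of_all _ fun z => ?_)
        rw [norm_mul, mul_comm]
        exact mul_le_mul_of_nonneg_right (g.norm_coe_le_norm z.2) (norm_nonneg _)
    _ = ‖g‖ * ∫ x, ‖φ x‖ ∂μ := by
        rw [integral_const_mul, integral_comp_fst_of_fst_eq hπ hφ.norm.aestronglyMeasurable]

lemma dist_integral_comp_fst_mul_le_of_fst_eq [OpensMeasurableSpace Y] {φ ψ : X → ℝ}
    (hπ : π.fst = μ) (hφ : Integrable φ μ) (hψ : Integrable ψ μ)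
    (g : BoundedContinuousFunction Y ℝ) :
    dist (∫ z, φ z.1 * g z.2 ∂π) (∫ z, ψ z.1 * g z.2 ∂π) ≤ ‖g‖ * ∫ x, ‖φ x - ψ x‖ ∂μ := by
  rw [dist_eq_norm, ← integral_sub (integrable_comp_fst_mul_of_fst_eq hπ hφ g)
    (integrable_comp_fst_mul_of_fst_eq hπ hψ g)]
  simpa only [Pi.sub_apply, sub_mul] using norm_integral_comp_fst_mul_le_of_fst_eq hπ (hφ.sub hψ) g

end MeasureTheory.Measure

theorem stmt18_general {X Y : Type*}
    [MetricSpace X]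
    [MeasurableSpace X] [BorelSpace X]
    [MetricSpace Y]
    [MeasurableSpace Y] [BorelSpace Y]
    (μ : Measure X) [IsFiniteMeasure μ]
    (κs : ℕ → Measure (X × Y)) (κ : Measure (X × Y))
    (hκsfst : ∀ n, (κs n).fst = μ)
    (hκfst : κ.fst = μ)
    (hweak : ∀ f : BoundedContinuousFunction (X × Y) ℝ,
      Tendsto (fun n => ∫ z, f z ∂(κs n)) atTop (nhds (∫ z, f z ∂κ)))
    (h : X → ℝ) (hh : MemLp h ⊤ μ) (g : BoundedContinuousFunction Y ℝ) :
    Tendsto (fun n => ∫ z : X × Y, h z.1 * g z.2 ∂(κs n)) atTop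
      (nhds (∫ z : X × Y, h z.1 * g z.2 ∂κ)) := by
  have hint : Integrable h μ := hh.integrable le_top
  refine Metric.tendsto_of_forall_approx fun ε hε => ?_
  obtain ⟨f, hhf, hf⟩ := hint.exists_boundedContinuous_integral_sub_le
    (div_pos hε (add_pos_of_nonneg_of_pos (norm_nonneg g) one_pos))
  have hclose : ‖g‖ * ∫ x, ‖h x - f x‖ ∂μ ≤ ε :=
    calc ‖g‖ * ∫ x, ‖h x - f x‖ ∂μ ≤ (‖g‖ + 1) * (ε / (‖g‖ + 1)) := by
          gcongr
          linarith
      _ = ε := by field_simp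
  refine ⟨fun n => ∫ z, f z.1 * g z.2 ∂(κs n), ∫ z, f z.1 * g z.2 ∂κ,
    hweak (f.compContinuous ⟨Prod.fst, continuous_fst⟩ *
      g.compContinuous ⟨Prod.snd, continuous_snd⟩),
    Eventually.of_forall fun n => ?_, ?_⟩
  · exact (Measure.dist_integral_comp_fst_mul_le_of_fst_eq (hκsfst n) hint hf g).trans hclose
  · exact (Measure.dist_integral_comp_fst_mul_le_of_fst_eq hκfst hint hf g).trans hclose

/-- Let `X`, `Y` be Polish metric spaces, `μ`, `ν` finite positive Borel
measures of equal mass, and `κ_n, κ ∈ Π(μ,ν)` with `κ_n → κ` weakly.  Then for every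
`h ∈ L^∞(X,μ)` and every bounded continuous `g : Y → ℝ`,
`∫ h(x) g(y) dκ_n(x,y) → ∫ h(x) g(y) dκ(x,y)`. -/
theorem stmt18 {X Y : Type*}
    [MetricSpace X] [CompleteSpace X] [TopologicalSpace.SeparableSpace X]
    [MeasurableSpace X] [BorelSpace X]
    [MetricSpace Y] [CompleteSpace Y] [TopologicalSpace.SeparableSpace Y]
    [MeasurableSpace Y] [BorelSpace Y]
    (μ : Measure X) (ν : Measure Y) [IsFiniteMeasure μ] [IsFiniteMeasure ν]
    (hmass : μ Set.univ = ν Set.univ)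
    (κs : ℕ → Measure (X × Y)) (κ : Measure (X × Y))
    (hκsfst : ∀ n, (κs n).fst = μ) (hκssnd : ∀ n, (κs n).snd = ν)
    (hκfst : κ.fst = μ) (hκsnd : κ.snd = ν)
    (hweak : ∀ f : BoundedContinuousFunction (X × Y) ℝ,
      Tendsto (fun n => ∫ z, f z ∂(κs n)) atTop (nhds (∫ z, f z ∂κ)))
    (h : X → ℝ) (hh : MemLp h ⊤ μ) (g : BoundedContinuousFunction Y ℝ) :
    Tendsto (fun n => ∫ z : X × Y, h z.1 * g z.2 ∂(κs n)) atTop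
      (nhds (∫ z : X × Y, h z.1 * g z.2 ∂κ)) :=
  stmt18_general μ κs κ hκsfst hκfst hweak h hh g
end
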